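/- arXiv:2411.11664 — 2 statements merged into one kernel-verified Lean document; each statement's English description precedes it below -/
import Mathlib

section
/- Let M ⊆ ℝ^m be a closed convex set, g convex, f and h differentiable, L ≥ 0, and y ∈ M. If ⟨∇f(y) − ∇h(y), x − y⟩ + g(x) − g(y) + (L/2)‖x − y‖² ≥ 0 for all x ∈ M, then y is a first-order stationary point of min_{x∈M} f(x)+g(x)−h(x): there exists u ∈ ∂g(y) such that ⟨∇f(y) + u − ∇h(y), x − y⟩ ≥ 0 for all x ∈ M. -/
open RealInnerProductSpace

set_option maxHeartbeats 1000000 in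
/-- if the gap expression is `≥ 0` (in the reversed form) for all `x ∈ M`,
then `y` is a first-order stationary point: there is `u ∈ ∂g(y)` such that
`⟨∇f(y) + u − ∇h(y), x − y⟩ ≥ 0` for all `x ∈ M`. -/
theorem stationary_of_gap_zero {m : ℕ} (M : Set (EuclideanSpace ℝ (Fin m)))
    (hMne : M.Nonempty) (hMclosed : IsClosed M) (hMconv : Convex ℝ M)
    (f g h : EuclideanSpace ℝ (Fin m) → ℝ)
    (hg : ConvexOn ℝ Set.univ g)
    (hf : Differentiable ℝ f) (hh : Differentiable ℝ h)
    (L : ℝ) (hL : 0 ≤ L)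
    (y : EuclideanSpace ℝ (Fin m)) (hy : y ∈ M)
    (hgap : ∀ x ∈ M, 0 ≤ ⟪gradient f y - gradient h y, x - y⟫ + g x - g y
      + L / 2 * ‖x - y‖ ^ 2) :
    ∃ u : EuclideanSpace ℝ (Fin m),
      (∀ x, g y + ⟪u, x - y⟫ ≤ g x) ∧
      (∀ x ∈ M, 0 ≤ ⟪gradient f y + u - gradient h y, x - y⟫) := by
  classical
  set v : EuclideanSpace ℝ (Fin m) := gradient f y - gradient h y with hv
  -- Step 1: the limit as t → 0 gives the first-order inequality on M.
  have key : ∀ x ∈ M, 0 ≤ ⟪v, x - y⟫ + (g x - g y) := by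
    intro x hx
    set A : ℝ := ⟪v, x - y⟫ + (g x - g y) with hA
    set c : ℝ := L / 2 * ‖x - y‖ ^ 2 with hc
    have hc0 : 0 ≤ c := by positivity
    have step : ∀ t : ℝ, 0 < t → t ≤ 1 → 0 ≤ A + c * t := by
      intro t ht0 ht1
      have hone : (1 - t) + t = 1 := by ring
      have hz : (1 - t) • y + t • x ∈ M :=
        hMconv hy hx (by linarith) (le_of_lt ht0) hone
      have hgz : g ((1 - t) • y + t • x) ≤ (1 - t) * g y + t * g x :=
        hg.2 (Set.mem_univ y) (Set.mem_univ x) (by linarith) (le_of_lt ht0) hone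
      have hsub : ((1 - t) • y + t • x) - y = t • (x - y) := by
        rw [smul_sub]; module
      have h1 := hgap _ hz
      rw [hsub, real_inner_smul_right, norm_smul] at h1
      have hnt : ‖t‖ = t := by rw [Real.norm_eq_abs, abs_of_pos ht0]
      rw [hnt] at h1
      have h2 : 0 ≤ t * ⟪v, x - y⟫ + t * (g x - g y) + L / 2 * (t * ‖x - y‖) ^ 2 := by
        nlinarith [h1, hgz]
      have h3 : 0 ≤ t * (A + c * t) := by
        rw [hA, hc]; nlinarith [h2]
      nlinarith [h3, ht0]
    by_contra hAneg
    push_neg at hAneg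
    have ht0 : 0 < min 1 ((-A) / (2 * (c + 1))) := by
      apply lt_min one_pos
      apply div_pos (by linarith) (by linarith)
    have ht1 : min 1 ((-A) / (2 * (c + 1))) ≤ 1 := min_le_left _ _
    have h4 := step _ ht0 ht1
    have ht2 : min 1 ((-A) / (2 * (c + 1))) ≤ (-A) / (2 * (c + 1)) := min_le_right _ _
    have hd : 0 < 2 * (c + 1) := by linarith
    have : c * min 1 ((-A) / (2 * (c + 1))) ≤ c * ((-A) / (2 * (c + 1))) :=
      mul_le_mul_of_nonneg_left ht2 hc0
    have hfrac : c * ((-A) / (2 * (c + 1))) ≤ (-A) / 2 := by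
      rw [← mul_div_assoc, div_le_div_iff₀ hd two_pos]
      nlinarith [hAneg, hc0]
    nlinarith [h4, this, hfrac, hAneg]
  -- Step 2: separation in (EuclideanSpace ℝ (Fin m)) × ℝ.
  have hgcont : Continuous g := by
    have := hg.continuousOn isOpen_univ
    exact continuousOn_univ.mp this
  set C : Set ((EuclideanSpace ℝ (Fin m)) × ℝ) := {p | g p.1 - g y < p.2} with hC
  set D : Set ((EuclideanSpace ℝ (Fin m)) × ℝ) := {p | p.1 ∈ M ∧ p.2 ≤ -⟪v, p.1 - y⟫} with hD
  have hCopen : IsOpen C := by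
    have : Continuous fun p : (EuclideanSpace ℝ (Fin m)) × ℝ => p.2 - (g p.1 - g y) :=
      continuous_snd.sub ((hgcont.comp continuous_fst).sub continuous_const)
    have : IsOpen {p : (EuclideanSpace ℝ (Fin m)) × ℝ | 0 < p.2 - (g p.1 - g y)} :=
      isOpen_lt continuous_const this
    convert this using 1
    ext p; simp [hC, sub_pos]
  have hCconv : Convex ℝ C := by
    intro p hp q hq a b ha hb hab
    simp only [hC, Set.mem_setOf_eq] at hp hq ⊢
    have := hg.2 (Set.mem_univ p.1) (Set.mem_univ q.1) ha hb hab
    have h1 : g (a • p.1 + b • q.1) ≤ a * g p.1 + b * g q.1 := this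
    have : a * (g p.1 - g y) + b * (g q.1 - g y) < a * p.2 + b * q.2 := by
      rcases eq_or_lt_of_le ha with ha' | ha'
      · rcases eq_or_lt_of_le hb with hb' | hb'
        · exfalso; rw [← ha', ← hb'] at hab; norm_num at hab
        · rw [← ha']; simpa using mul_lt_mul_of_pos_left hq hb'
      · rcases eq_or_lt_of_le hb with hb' | hb'
        · rw [← hb']; simpa using mul_lt_mul_of_pos_left hp ha'
        · exact add_lt_add (mul_lt_mul_of_pos_left hp ha') (mul_lt_mul_of_pos_left hq hb')
    show g (a • p.1 + b • q.1) - g y < a * p.2 + b * q.2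
    calc g (a • p.1 + b • q.1) - g y ≤ a * g p.1 + b * g q.1 - g y := by linarith
      _ = a * (g p.1 - g y) + b * (g q.1 - g y) := by linear_combination g y * hab
      _ < a * p.2 + b * q.2 := this
  have hDconv : Convex ℝ D := by
    intro p hp q hq a b ha hb hab
    obtain ⟨hp1, hp2⟩ := hp
    obtain ⟨hq1, hq2⟩ := hq
    refine ⟨hMconv hp1 hq1 ha hb hab, ?_⟩
    show a * p.2 + b * q.2 ≤ -⟪v, (a • p.1 + b • q.1) - y⟫
    have hay : (a • p.1 + b • q.1) - y = a • (p.1 - y) + b • (q.1 - y) := by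
      have h' : a • (p.1 - y) + b • (q.1 - y) = a • p.1 + b • q.1 - (a + b) • y := by
        module
      rw [h', hab, one_smul]
    rw [hay, inner_add_right, real_inner_smul_right, real_inner_smul_right]
    nlinarith [mul_le_mul_of_nonneg_left hp2 ha, mul_le_mul_of_nonneg_left hq2 hb]
  have hdisj : Disjoint C D := by
    rw [Set.disjoint_left]
    rintro p hp ⟨hp1, hp2⟩
    have := key p.1 hp1
    simp only [hC, Set.mem_setOf_eq] at hp
    linarith
  obtain ⟨φ, s, hφC, hφD⟩ := geometric_hahn_banach_open hCconv hCopen hDconv hdisj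
  set ψ : (EuclideanSpace ℝ (Fin m)) →L[ℝ] ℝ := φ.comp (ContinuousLinearMap.inl ℝ (EuclideanSpace ℝ (Fin m)) ℝ) with hψ
  set a : ℝ := φ (0, 1) with ha
  have hφdecomp : ∀ (x : EuclideanSpace ℝ (Fin m)) (r : ℝ), φ (x, r) = ψ x + r * a := by
    intro x r
    have : (x, r) = (x, (0 : ℝ)) + r • ((0 : EuclideanSpace ℝ (Fin m)), (1 : ℝ)) := by
      simp [Prod.ext_iff]
    rw [this, map_add, map_smul]
    simp [hψ, ha, ContinuousLinearMap.inl_apply, smul_eq_mul]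
  -- y itself: (y, ε) ∈ C for ε > 0, (y, 0) ∈ D.
  have hyD : s ≤ ψ y := by
    have : ((y, (0:ℝ)) : (EuclideanSpace ℝ (Fin m)) × ℝ) ∈ D := ⟨hy, by simp⟩
    have := hφD _ this
    rwa [hφdecomp, zero_mul, add_zero] at this
  have hyCe : ∀ ε : ℝ, 0 < ε → ψ y + ε * a < s := by
    intro ε hε
    have : ((y, ε) : (EuclideanSpace ℝ (Fin m)) × ℝ) ∈ C := by simp [hC, hε]
    have := hφC _ this
    rwa [hφdecomp] at this
  have haneg : a < 0 := by
    have h1 := hyCe 1 one_pos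
    nlinarith [hyD, h1]
  have hane' : a ≠ 0 := ne_of_lt haneg
  have hdm : ∀ X : ℝ, (X / (-a)) * a = -X := by
    intro X
    rw [div_mul_eq_mul_div, div_neg, mul_div_assoc, div_self hane', mul_one]
  have hys : ψ y ≤ s := by
    by_contra hcon
    push_neg at hcon
    have hε : 0 < (ψ y - s) / (-a) := div_pos (by linarith) (by linarith)
    have h1 := hyCe _ hε
    rw [hdm] at h1
    linarith [h1]
  -- subgradient inequality: for all x, ψ x + (g x - g y) * a ≤ ψ y
  have hsubgrad : ∀ x : EuclideanSpace ℝ (Fin m), ψ x + (g x - g y) * a ≤ ψ y := by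
    intro x
    have hlt : ∀ ε : ℝ, 0 < ε → ψ x + (g x - g y + ε) * a < s := by
      intro ε hε
      have : ((x, g x - g y + ε) : (EuclideanSpace ℝ (Fin m)) × ℝ) ∈ C := by simp [hC, hε]
      have := hφC _ this
      rwa [hφdecomp] at this
    by_contra hcon
    push_neg at hcon
    have hane : a ≠ 0 := ne_of_lt haneg
    have hε : 0 < (ψ x + (g x - g y) * a - ψ y) / (-a) := by
      apply div_pos (by linarith) (by linarith)
    have h1 := hlt _ hε
    rw [add_mul] at h1
    rw [hdm] at h1
    have h2 : s ≤ ψ y := hyD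
    linarith [h1, h2]
  -- variational inequality: for x ∈ M,
  have hvi : ∀ x ∈ M, ψ y ≤ ψ x + (-⟪v, x - y⟫) * a := by
    intro x hx
    have : ((x, -⟪v, x - y⟫) : (EuclideanSpace ℝ (Fin m)) × ℝ) ∈ D := ⟨hx, le_refl _⟩
    have := hφD _ this
    rw [hφdecomp] at this
    linarith [hys, this]
  -- Riesz representation of ψ, scaled.
  set z : EuclideanSpace ℝ (Fin m) := (InnerProductSpace.toDual ℝ (EuclideanSpace ℝ (Fin m))).symm ψ with hz
  have hzinner : ∀ w : EuclideanSpace ℝ (Fin m), ⟪z, w⟫ = ψ w := fun w => InnerProductSpace.toDual_symm_apply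
  refine ⟨(-a)⁻¹ • z, ?_, ?_⟩
  · intro x
    have h1 := hsubgrad x
    have hψxy : ψ x - ψ y = ψ (x - y) := by rw [map_sub]
    have h2 : ψ (x - y) ≤ -((g x - g y) * a) := by rw [← hψxy]; linarith
    rw [real_inner_smul_left, hzinner]
    have hna : 0 < -a := by linarith
    have hane : a ≠ 0 := ne_of_lt haneg
    have h7 : (-a)⁻¹ * ψ (x - y) ≤ g x - g y := by
      rw [inv_mul_le_iff₀ hna]
      nlinarith [h2]
    linarith [h7]
  · intro x hx
    have h1 := hvi x hx
    have hψxy : ψ x - ψ y = ψ (x - y) := by rw [map_sub]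
    have h3 : ⟪v, x - y⟫ * a ≤ ψ (x - y) := by rw [← hψxy]; nlinarith [h1]
    have hveq : gradient f y + (-a)⁻¹ • z - gradient h y = v + (-a)⁻¹ • z := by
      rw [hv]; module
    rw [hveq, inner_add_left, real_inner_smul_left, hzinner]
    have hna : 0 < -a := by linarith
    have hane : a ≠ 0 := ne_of_lt haneg
    have h5 := mul_le_mul_of_nonneg_left h3 (le_of_lt (inv_pos.mpr hna))
    have h6 : (-a)⁻¹ * (⟪v, x - y⟫ * a) = -⟪v, x - y⟫ := by
      field_simp
    linarith [h5, h6.le, h6.ge]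
end

section
/- Let f be L-smooth, g convex, h convex and differentiable on ℝ^m, M closed and convex, φ = f + g − h. Suppose x⁺ ∈ M satisfies φ̂(x⁺, x) ≤ φ̂(z, x) for all z ∈ M, where φ̂(z, x) = f(z) + g(z) − h(x) − ⟨∇h(x), z − x⟩. Then for every z ∈ M: ⟨∇f(x) − ∇h(x), x − z⟩ + g(x) − g(z) − (L/2)‖z − x‖² ≤ φ(x) − φ(x⁺). -/
/-!
Convexity of `h` gives `h x + ⟪∇h x, xp - x⟫ ≤ h xp`, so `φ xp ≤ φ̂(xp, x)`; minimality of `xp`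
gives `φ̂(xp, x) ≤ φ̂(z, x)`; and the descent lemma for the `L`-Lipschitz gradient of `f`
bounds `f z` by `f x + ⟪∇f x, z - x⟫ + L/2 ‖z - x‖²`. Chaining the three is the claim.
-/

open RealInnerProductSpace AffineMap Set

variable {F : Type*} [NormedAddCommGroup F] [InnerProductSpace ℝ F] [CompleteSpace F]

lemma HasGradientAt.hasDerivAt_comp_lineMap {f : F → ℝ} {f' a b : F} {t : ℝ}
    (hf : HasGradientAt f f' (lineMap a b t)) :
    HasDerivAt (fun s => f (lineMap a b s)) ⟪f', b - a⟫ t := by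
  have := hf.hasFDerivAt.comp_hasDerivAt t hasDerivAt_lineMap
  rwa [InnerProductSpace.toDual_apply_apply] at this

lemma ConvexOn.add_inner_gradient_le {s : Set F} {h : F → ℝ} (hconv : ConvexOn ℝ s h)
    {x z : F} (hx : x ∈ s) (hz : z ∈ s) (hd : DifferentiableAt ℝ h x) :
    h x + ⟪gradient h x, z - x⟫ ≤ h z := by
  have hline : ConvexOn ℝ (lineMap x z ⁻¹' s) (h ∘ lineMap x z) := hconv.comp_affineMap _
  have hgrad : HasGradientAt h (gradient h x) (lineMap x z (0 : ℝ)) := by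
    simpa using hd.hasGradientAt
  have hslope := hline.le_slope_of_hasDerivAt (by simpa using hx) (by simpa using hz)
    zero_lt_one hgrad.hasDerivAt_comp_lineMap
  simp only [slope_def_field, Function.comp_apply, lineMap_apply_zero, lineMap_apply_one,
    sub_zero, div_one] at hslope
  linarith

lemma inner_gradient_lineMap_sub_le {f : F → ℝ} {L : ℝ}
    (hfL : ∀ x y, ‖gradient f x - gradient f y‖ ≤ L * ‖x - y‖) (x z : F) {t : ℝ} (ht : 0 ≤ t) :
    ⟪gradient f (lineMap x z t) - gradient f x, z - x⟫ ≤ L * t * ‖z - x‖ ^ 2 :=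
  calc ⟪gradient f (lineMap x z t) - gradient f x, z - x⟫
      ≤ ‖gradient f (lineMap x z t) - gradient f x‖ * ‖z - x‖ := real_inner_le_norm _ _
    _ ≤ L * ‖lineMap x z t - x‖ * ‖z - x‖ := by gcongr; exact hfL _ _
    _ = L * t * ‖z - x‖ ^ 2 := by
      rw [← vsub_eq_sub, lineMap_vsub_left, vsub_eq_sub, norm_smul, Real.norm_of_nonneg ht]
      ring

/-- The descent lemma. -/
theorem le_add_inner_gradient_add_sq_of_lipschitz_gradient {f : F → ℝ} {L : ℝ}
    (hf : Differentiable ℝ f) (hfL : ∀ x y, ‖gradient f x - gradient f y‖ ≤ L * ‖x - y‖)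
    (x z : F) : f z ≤ f x + ⟪gradient f x, z - x⟫ + L / 2 * ‖z - x‖ ^ 2 := by
  set φ : ℝ → ℝ := fun t => f (lineMap x z t) - t * ⟪gradient f x, z - x⟫
  set B : ℝ → ℝ := fun t => f x + L / 2 * t ^ 2 * ‖z - x‖ ^ 2
  have hφ (t : ℝ) :
      HasDerivAt φ ⟪gradient f (lineMap x z t) - gradient f x, z - x⟫ t := by
    rw [inner_sub_left]
    exact ((hf _).hasGradientAt.hasDerivAt_comp_lineMap).sub (hasDerivAt_mul_const _)
  have hB (t : ℝ) : HasDerivAt B (L * t * ‖z - x‖ ^ 2) t := by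
    refine ((((hasDerivAt_pow 2 t).const_mul (L / 2)).mul_const (‖z - x‖ ^ 2)).const_add
      (f x)).congr_deriv ?_
    push_cast
    ring
  have hφB := image_le_of_deriv_right_le_deriv_boundary (a := 0) (b := 1)
    (continuous_iff_continuousAt.2 fun t => (hφ t).continuousAt).continuousOn (fun t _ => (hφ t).hasDerivWithinAt)
    (by simp [φ, B]) (continuous_iff_continuousAt.2 fun t => (hB t).continuousAt).continuousOn (fun t _ => (hB t).hasDerivWithinAt)
    (fun t ht => inner_gradient_lineMap_sub_le hfL x z ht.1) (right_mem_Icc.mpr zero_le_one)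
  simp only [φ, B, lineMap_apply_one, one_mul, one_pow, mul_one] at hφB
  linarith

theorem dca_key_inequality_general {m : ℕ} (M : Set (EuclideanSpace ℝ (Fin m)))
    (f g h : EuclideanSpace ℝ (Fin m) → ℝ) (L : ℝ)
    (hf : Differentiable ℝ f)
    (hfL : ∀ x y, ‖gradient f x - gradient f y‖ ≤ L * ‖x - y‖)
    (hh : Differentiable ℝ h) (hhconv : ConvexOn ℝ Set.univ h)
    (x xp : EuclideanSpace ℝ (Fin m))
    (hmin : ∀ z ∈ M,
      f xp + g xp - h x - ⟪gradient h x, xp - x⟫ ≤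
      f z + g z - h x - ⟪gradient h x, z - x⟫) :
    ∀ z ∈ M,
      ⟪gradient f x - gradient h x, x - z⟫ + g x - g z - L / 2 * ‖z - x‖ ^ 2 ≤
        (f x + g x - h x) - (f xp + g xp - h xp) := by
  intro z hz
  have h_above_tangent := hhconv.add_inner_gradient_le (mem_univ x) (mem_univ xp) (hh x)
  have f_descent := le_add_inner_gradient_add_sq_of_lipschitz_gradient hf hfL x z
  have xp_min := hmin z hz
  rw [inner_sub_left, ← neg_sub z x, inner_neg_right, inner_neg_right]
  linarith

/-- key per-iteration inequality for the DCA/BDCA analysis. -/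
theorem dca_key_inequality {m : ℕ} (M : Set (EuclideanSpace ℝ (Fin m)))
    (hMclosed : IsClosed M) (hMconv : Convex ℝ M)
    (f g h : EuclideanSpace ℝ (Fin m) → ℝ) (L : ℝ) (hL : 0 ≤ L)
    (hf : Differentiable ℝ f)
    (hfL : ∀ x y, ‖gradient f x - gradient f y‖ ≤ L * ‖x - y‖)
    (hgconv : ConvexOn ℝ Set.univ g)
    (hh : Differentiable ℝ h) (hhconv : ConvexOn ℝ Set.univ h)
    (x xp : EuclideanSpace ℝ (Fin m)) (hx : x ∈ M) (hxp : xp ∈ M)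
    (hmin : ∀ z ∈ M,
      f xp + g xp - h x - ⟪gradient h x, xp - x⟫ ≤
      f z + g z - h x - ⟪gradient h x, z - x⟫) :
    ∀ z ∈ M,
      ⟪gradient f x - gradient h x, x - z⟫ + g x - g z - L / 2 * ‖z - x‖ ^ 2 ≤
        (f x + g x - h x) - (f xp + g xp - h xp) :=
  dca_key_inequality_general M f g h L hf hfL hh hhconv x xp hmin
end
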